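/- Let n ≥ 1 and i > n be natural numbers, let h ∈ ℤ with 1 ≤ h ≤ n, let h_j ∈ ℤ be given for each n < j < i, and let σ_j ∈ ℝ be given for each 1 ≤ j < i. For 1 ≤ j < i, set φ_j = φ(j, 1) if j ≤ n and φ_j = φ(h_j, 1) if j > n, and define the attention score s_j = φ(h, 1) · φ_j − [j > n]. Let M = {j : 1 ≤ j < i, s_j = max_{1 ≤ j' < i} s_{j'}} and let σ̄ = (1/|M|) Σ_{j ∈ M} σ_j be the saturated-attention output of the values σ_j. Then σ̄ = σ_h; that is, the head retrieves exactly the value stored at position h of the input segment. -/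

import Mathlib

/-!
Every hash `φ(x, 1)` is a unit vector, so by Cauchy–Schwarz every score is at most `1`, and
`s_h = 1`. A score equal to `1` forces `j ≤ n` (the penalty is `1`) and `φ(h, 1) = φ(j, 1)`
(equality case of Cauchy–Schwarz). Since `x ↦ φ(x, 1)` is injective — the second coordinate
`1 / ‖(x, 1, -x, -1)‖` fixes the normalisation, then the first coordinate fixes `x` — the maximum
is attained only at `j = h`, so the attention averages over `{h}` alone.
-/

open scoped RealInnerProductSpace

/-- Layer norm: subtract the mean, then normalize to unit Euclidean norm. -/
noncomputable def layerNorm {ι : Type*} [Fintype ι] (v : EuclideanSpace ℝ ι) :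
    EuclideanSpace ℝ ι :=
  let c : EuclideanSpace ℝ ι :=
    WithLp.toLp 2 (fun j => v j - (∑ l, v l) / (Fintype.card ι))
  ‖c‖⁻¹ • c

/-- The layer-norm hash φ(x, y) = layer_norm(⟨x, y, −x, −y⟩) ∈ ℝ⁴. -/
noncomputable def lnHash (x y : ℝ) : EuclideanSpace ℝ (Fin 4) :=
  layerNorm (WithLp.toLp 2 ![x, y, -x, -y] : EuclideanSpace ℝ (Fin 4))

theorem layerNorm_of_sum_eq_zero {ι : Type*} [Fintype ι] {v : EuclideanSpace ℝ ι}
    (hv : ∑ l, v l = 0) : layerNorm v = ‖v‖⁻¹ • v := by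
  simp only [layerNorm, hv, zero_div, sub_zero, WithLp.toLp_ofLp]

theorem lnHash_eq_smul (x y : ℝ) :
    lnHash x y = ‖!₂[x, y, -x, -y]‖⁻¹ • !₂[x, y, -x, -y] :=
  layerNorm_of_sum_eq_zero (by simp [Fin.sum_univ_four])

theorem toLp_xy_neg_ne_zero {x y : ℝ} (hxy : (x, y) ≠ (0, 0)) : !₂[x, y, -x, -y] ≠ 0 :=
  fun h0 => hxy (by simpa using congrArg (fun v : EuclideanSpace ℝ (Fin 4) => (v 0, v 1)) h0)

theorem norm_lnHash {x y : ℝ} (hxy : (x, y) ≠ (0, 0)) : ‖lnHash x y‖ = 1 :=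
  lnHash_eq_smul x y ▸ norm_smul_inv_norm (toLp_xy_neg_ne_zero hxy)

theorem lnHash_injective {y : ℝ} (hy : y ≠ 0) : Function.Injective (lnHash · y) := by
  intro a b hab
  have hnorm := congrArg (· 1) hab
  have hfirst := congrArg (· 0) hab
  simp only [lnHash_eq_smul, PiLp.smul_apply, smul_eq_mul] at hnorm hfirst
  simp only [Matrix.cons_val_zero, Matrix.cons_val_one, mul_eq_mul_right_iff, inv_inj, hy,
    or_false] at hnorm hfirst
  rw [hnorm] at hfirst
  have hb : ‖!₂[b, y, -b, -y]‖⁻¹ ≠ 0 :=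
    inv_ne_zero (norm_ne_zero_iff.mpr (toLp_xy_neg_ne_zero (by simp [hy])))
  exact mul_left_cancel₀ hb hfirst

theorem real_inner_lnHash_le_one {x y x' y' : ℝ} (hxy : (x, y) ≠ (0, 0))
    (hxy' : (x', y') ≠ (0, 0)) : ⟪lnHash x y, lnHash x' y'⟫ ≤ 1 :=
  (real_inner_le_norm _ _).trans_eq (by rw [norm_lnHash hxy, norm_lnHash hxy', one_mul])

theorem real_inner_lnHash_eq_one_iff {x x' y : ℝ} (hy : y ≠ 0) :
    ⟪lnHash x y, lnHash x' y⟫ = 1 ↔ x = x' := by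
  have hunit : ∀ z : ℝ, ‖lnHash z y‖ = 1 := fun z => norm_lnHash (by simp [hy])
  rw [inner_eq_one_iff_of_norm_eq_one (hunit x) (hunit x')]
  exact (lnHash_injective hy).eq_iff

theorem Finset.filter_forall_le_eq_singleton {ι α : Type*} [Preorder α] {J : Finset ι}
    {s : ι → α} {h : ι} (hh : h ∈ J) (hmax : ∀ j ∈ J, s j ≤ s h)
    (huniq : ∀ j ∈ J, s h ≤ s j → j = h) [DecidablePred fun j => ∀ j' ∈ J, s j' ≤ s j] :
    J.filter (fun j => ∀ j' ∈ J, s j' ≤ s j) = {h} := by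
  ext j
  simp only [Finset.mem_filter, Finset.mem_singleton]
  constructor
  · rintro ⟨hj, hjmax⟩
    exact huniq j hj (hjmax h hh)
  · rintro rfl
    exact ⟨hh, hmax⟩

theorem input_tape_retrieval_value_general (n i : ℤ) (hni : n < i)
    (h : ℤ) (hh1 : 1 ≤ h) (hhn : h ≤ n) (hseq : ℤ → ℤ) (σ : ℤ → ℝ) :
    let φj : ℤ → EuclideanSpace ℝ (Fin 4) :=
      fun j => if j ≤ n then lnHash (j : ℝ) 1 else lnHash ((hseq j : ℤ) : ℝ) 1
    let s : ℤ → ℝ := fun j => ⟪lnHash (h : ℝ) 1, φj j⟫ - (if n < j then 1 else 0)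
    let J : Finset ℤ := Finset.Ico 1 i
    let M : Finset ℤ := J.filter fun j => ∀ j' ∈ J, s j' ≤ s j
    (M.card : ℝ)⁻¹ • ∑ j ∈ M, σ j = σ h := by
  intro φj s J M
  have hinner_le : ∀ j, ⟪lnHash (h : ℝ) 1, φj j⟫ ≤ 1 := fun j => by
    unfold φj; split_ifs <;> exact real_inner_lnHash_le_one (by simp) (by simp)
  have hs_le : ∀ j, s j ≤ 1 := fun j => by
    have := hinner_le j
    unfold s; split_ifs <;> linarith
  have hsh : s h = 1 := by
    simp only [s, φj, hhn, if_true, not_lt.mpr hhn, if_false, sub_zero,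
      real_inner_lnHash_eq_one_iff one_ne_zero]
  have hargmax : ∀ j, s h ≤ s j → j = h := fun j hj => by
    rw [hsh] at hj
    have hjn : j ≤ n := by
      by_contra hjn
      have := hinner_le j
      simp only [s, if_pos (not_le.mp hjn)] at hj
      linarith
    have hinner : ⟪lnHash (h : ℝ) 1, lnHash (j : ℝ) 1⟫ = 1 := by
      simp only [s, φj, hjn, if_true, not_lt.mpr hjn, if_false, sub_zero] at hj
      exact le_antisymm (real_inner_lnHash_le_one (by simp) (by simp)) hj
    exact_mod_cast ((real_inner_lnHash_eq_one_iff one_ne_zero).mp hinner).symm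
  have hM : M = {h} := Finset.filter_forall_le_eq_singleton
    (Finset.mem_Ico.mpr ⟨hh1, hhn.trans_lt hni⟩) (fun j _ => hsh ▸ hs_le j) (fun j _ => hargmax j)
  rw [hM, Finset.card_singleton, Finset.sum_singleton, Nat.cast_one, inv_one, one_smul]

/-- Input-tape retrieval via the layer-norm hash (Lemma "input-tape-sigma"):
if 1 ≤ h ≤ n, the saturated-attention output of the values σ_j under the scores
s_j = φ(h,1)·φ_j − [j > n] is exactly σ_h. -/
theorem input_tape_retrieval_value (n i : ℤ) (hn : 1 ≤ n) (hni : n < i)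
    (h : ℤ) (hh1 : 1 ≤ h) (hhn : h ≤ n) (hseq : ℤ → ℤ) (σ : ℤ → ℝ) :
    let φj : ℤ → EuclideanSpace ℝ (Fin 4) :=
      fun j => if j ≤ n then lnHash (j : ℝ) 1 else lnHash ((hseq j : ℤ) : ℝ) 1
    let s : ℤ → ℝ := fun j => ⟪lnHash (h : ℝ) 1, φj j⟫ - (if n < j then 1 else 0)
    let J : Finset ℤ := Finset.Ico 1 i
    let M : Finset ℤ := J.filter fun j => ∀ j' ∈ J, s j' ≤ s j
    (M.card : ℝ)⁻¹ • ∑ j ∈ M, σ j = σ h :=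
  input_tape_retrieval_value_general n i hni h hh1 hhn hseq σ
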